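/- Let n ≥ 1. Define the matrix A_n, indexed by functions Fin n → Fin d × (Fin d × Fin d), entrywise by A_n[x, y] = ∏_{t : Fin n} A[x t, y t] (the n-fold tensor power of A). Let α, β : (Fin n → Fin d) → ((Fin n → Fin d) → ℂ) be arbitrary families of vectors, and let x be the vector indexed by Fin n → Fin d × (Fin d × Fin d) defined by x s = α_{s₁}(s₂) · β_{s₁}(s₃), where s₁, s₂, s₃ : Fin n → Fin d denote the three component functions of s. Then ⟨x, A_n x⟩ = Σ_{s,s'} conj(x s) · A_n[s, s'] · x s' equals 0 if and only if for every i : Fin n → Fin d, α_i = 0 or β_i = 0. (This is the matrix-theoretic core of Theorem 1: two pure inputs to n copies of the channel N_d have exactly orthogonal outputs iff for every computational-basis string at most one of the corresponding component vectors is nonzero.) -/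

import Mathlib

/-!
Write `P = 1 - Φ` and let `U` be the projector of `ℂ^d` onto the constant vectors. Then
`A = d/(d+1) • (1 ⊗ P) + d/(d²-1) • ((1 - U) ⊗ P) + d • (U ⊗ Φ)` is a positive combination of
orthogonal projections, so `A` is a Gram matrix with positive weights, and hence so is its
tensor power `A_n`. The quadratic form `⟨x, A_n x⟩` is therefore a positively weighted sum of
`|⟨ψ, x⟩|²`, and vanishes only if `x` is orthogonal to every product of rows of `1 ⊗ P`.
Paired with `x`, the product of the rows `(i t, (p t, q t))` is the `(p, q)` entry of
`P^{⊗n} (α_i ⊗ β_i)`.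

It remains to see that `P^{⊗n} (α ⊗ β) = 0` forces `α = 0` or `β = 0`, by induction on `n`.
Off the diagonal, the rows of `P` are standard basis vectors, so fixing one coordinate to a pair
`(a, b)` with `a ≠ b` gives the same hypothesis for the slices of `α` at `a` and of `β` at `b`;
by induction one of them vanishes. Hence a string in the support of `α` and one in the support
of `β` agree in every coordinate, so both supports are the same singleton `{R}`, and the row
`(R, R)` of `P^{⊗n}` gives `(1 - 1/d)^n α(R) β(R) = 0`.
-/

open Matrix Kronecker

/-- Projector onto the maximally entangled state: Φ[(i,j),(k,l)] = 1/d if i=j and k=l. -/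
noncomputable def Phi (d : ℕ) : Matrix (Fin d × Fin d) (Fin d × Fin d) ℂ :=
  fun p q => if p.1 = p.2 ∧ q.1 = q.2 then ((d : ℂ))⁻¹ else 0

/-- Coefficients a i k: 1 on the diagonal, -1/(d²-1) off the diagonal. -/
noncomputable def aCoef (d : ℕ) (i k : Fin d) : ℝ :=
  if i = k then 1 else -1 / ((d : ℝ) ^ 2 - 1)

/-- The matrix A = Σ_{i,k} E_{ik} ⊗ₖ (a i k • (I − Φ) + Φ). -/
noncomputable def Amat (d : ℕ) : Matrix (Fin d × (Fin d × Fin d)) (Fin d × (Fin d × Fin d)) ℂ :=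
  ∑ i : Fin d, ∑ k : Fin d,
    (Matrix.single i k (1 : ℂ)) ⊗ₖ
      (aCoef d i k • ((1 : Matrix (Fin d × Fin d) (Fin d × Fin d) ℂ) - Phi d) + Phi d)

/-- The n-fold tensor (Kronecker) power of A, indexed by functions Fin n → Fin d × (Fin d × Fin d). -/
noncomputable def AmatPow (d n : ℕ) :
    Matrix (Fin n → Fin d × (Fin d × Fin d)) (Fin n → Fin d × (Fin d × Fin d)) ℂ :=
  fun x y => ∏ t : Fin n, Amat d (x t) (y t)

open ComplexConjugate

theorem IsStarProjection.kronecker {R l m : Type*} [CommSemiring R] [StarRing R]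
    [Fintype l] [Fintype m] [DecidableEq l] [DecidableEq m]
    {A : Matrix l l R} {B : Matrix m m R} (hA : IsStarProjection A) (hB : IsStarProjection B) :
    IsStarProjection (A ⊗ₖ B) := by
  rw [isStarProjection_iff'] at *
  refine ⟨?_, ?_⟩
  · rw [← mul_kronecker_mul, hA.1, hB.1]
  · rw [star_eq_conjTranspose, conjTranspose_kronecker, ← star_eq_conjTranspose,
      ← star_eq_conjTranspose, hA.2, hB.2]

theorem IsStarProjection.apply_eq_sum_star_mul {R n : Type*} [CommSemiring R] [StarRing R]
    [Fintype n] {Q : Matrix n n R} (hQ : IsStarProjection Q) (a b : n) :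
    Q a b = ∑ j, star (Q j a) * Q j b := by
  calc Q a b = (star Q * Q) a b := by rw [hQ.isSelfAdjoint.star_eq, hQ.isIdempotentElem.eq]
    _ = _ := rfl

theorem sum_conj_mul_prod_mul_eq_sum_normSq {ι V K : Type*} [Fintype ι] [DecidableEq ι]
    [Fintype V] [Fintype K] (w : K → ℝ) (ψ : K → V → ℂ) (M : Matrix V V ℂ)
    (hM : ∀ u v, M u v = ∑ k, (w k : ℂ) * conj (ψ k u) * ψ k v) (x : (ι → V) → ℂ) :
    ∑ s, ∑ s', conj (x s) * (∏ t, M (s t) (s' t)) * x s' =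
      ((∑ F : ι → K, (∏ t, w (F t)) * Complex.normSq (∑ s, (∏ t, ψ (F t) (s t)) * x s) : ℝ)
        : ℂ) := by
  have hprod : ∀ s s' : ι → V, ∏ t, M (s t) (s' t) =
      ∑ F : ι → K, ∏ t, (w (F t) : ℂ) * conj (ψ (F t) (s t)) * ψ (F t) (s' t) := fun s s' => by
    simp_rw [hM]
    exact Fintype.prod_sum _
  have hF : ∀ F : ι → K,
      (((∏ t, w (F t)) * Complex.normSq (∑ s, (∏ t, ψ (F t) (s t)) * x s) : ℝ) : ℂ) =
        ∑ s, ∑ s', conj (x s) * (∏ t, (w (F t) : ℂ) * conj (ψ (F t) (s t)) * ψ (F t) (s' t)) *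
          x s' := by
    intro F
    rw [Complex.ofReal_mul, Complex.normSq_eq_conj_mul_self, map_sum, Finset.sum_mul_sum,
      Finset.mul_sum]
    refine Finset.sum_congr rfl fun s _ => ?_
    rw [Finset.mul_sum]
    refine Finset.sum_congr rfl fun s' _ => ?_
    simp only [Finset.prod_mul_distrib, map_mul, map_prod, Complex.ofReal_prod]
    ring
  simp_rw [hprod, Finset.mul_sum, Finset.sum_mul, Complex.ofReal_sum, hF]
  exact (Finset.sum_congr rfl fun s _ => Finset.sum_comm).trans Finset.sum_comm

theorem sum_prod_mul_eq_zero_of_sum_conj_mul_prod_mul_eq_zero {ι V K : Type*} [Fintype ι]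
    [DecidableEq ι] [Fintype V] [Fintype K] {w : K → ℝ} (hw : ∀ k, 0 < w k) {ψ : K → V → ℂ}
    {M : Matrix V V ℂ} (hM : ∀ u v, M u v = ∑ k, (w k : ℂ) * conj (ψ k u) * ψ k v)
    {x : (ι → V) → ℂ} (hx : ∑ s, ∑ s', conj (x s) * (∏ t, M (s t) (s' t)) * x s' = 0)
    (F : ι → K) : ∑ s, (∏ t, ψ (F t) (s t)) * x s = 0 := by
  rw [sum_conj_mul_prod_mul_eq_sum_normSq w ψ M hM, Complex.ofReal_eq_zero,
    Finset.sum_eq_zero_iff_of_nonneg fun F _ =>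
      mul_nonneg (Finset.prod_nonneg fun t _ => (hw (F t)).le) (Complex.normSq_nonneg _)] at hx
  have hF := hx F (Finset.mem_univ F)
  rwa [mul_eq_zero, or_iff_right (Finset.prod_pos fun t _ => hw (F t)).ne',
    Complex.normSq_eq_zero] at hF

theorem IsStarProjection.sum_smul_apply {J V : Type*} [Fintype J] [Fintype V] (w : J → ℝ)
    {Q : J → Matrix V V ℂ} (hQ : ∀ j, IsStarProjection (Q j)) (u v : V) :
    (∑ j, (w j : ℂ) • Q j) u v = ∑ k : J × V, (w k.1 : ℂ) * conj (Q k.1 k.2 u) * Q k.1 k.2 v := by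
  rw [Matrix.sum_apply, Fintype.sum_prod_type]
  refine Finset.sum_congr rfl fun j _ => ?_
  rw [Matrix.smul_apply, smul_eq_mul, (hQ j).apply_eq_sum_star_mul, Finset.mul_sum]
  simp_rw [mul_assoc]
  rfl

noncomputable def uniformProj (d : ℕ) : Matrix (Fin d) (Fin d) ℂ := Matrix.of fun _ _ => (d : ℂ)⁻¹

theorem isStarProjection_uniformProj (d : ℕ) : IsStarProjection (uniformProj d) := by
  rw [isStarProjection_iff']
  refine ⟨?_, ?_⟩
  · ext i j
    have hd : (d : ℂ) ≠ 0 := Nat.cast_ne_zero.mpr (Fin.pos i).ne'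
    simp [uniformProj, mul_apply]
    field_simp
  · ext i j
    simp [uniformProj]

theorem isStarProjection_Phi (d : ℕ) : IsStarProjection (Phi d) := by
  rw [isStarProjection_iff']
  refine ⟨?_, ?_⟩
  · ext x y
    have hd : (d : ℂ) ≠ 0 := Nat.cast_ne_zero.mpr (Fin.pos x.1).ne'
    by_cases hx : x.1 = x.2 <;> by_cases hy : y.1 = y.2 <;>
      simp [Phi, mul_apply, hx, hy, ← ite_and, Fintype.sum_prod_type]
    field_simp
  · ext x y
    by_cases hx : x.1 = x.2 <;> by_cases hy : y.1 = y.2 <;> simp [Phi, hx, hy]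

theorem Amat_apply (d : ℕ) (i k : Fin d) (x y : Fin d × Fin d) :
    Amat d (i, x) (k, y) = aCoef d i k * (1 - Phi d) x y + Phi d x y := by
  simp [Amat, Matrix.sum_apply, Matrix.single_apply, ite_and, Complex.real_smul]

noncomputable def gramProj (d : ℕ) :
    Fin 3 → Matrix (Fin d × (Fin d × Fin d)) (Fin d × (Fin d × Fin d)) ℂ :=
  ![1 ⊗ₖ (1 - Phi d), (1 - uniformProj d) ⊗ₖ (1 - Phi d), uniformProj d ⊗ₖ Phi d]

noncomputable def gramWeight (d : ℕ) : Fin 3 → ℝ := ![d / (d + 1), d / (d ^ 2 - 1), d]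

theorem Amat_eq_sum_smul_gramProj {d : ℕ} (hd : 2 ≤ d) :
    Amat d = ∑ j, (gramWeight d j : ℂ) • gramProj d j := by
  ext ⟨i, x⟩ ⟨k, y⟩
  have hd' : (2 : ℝ) ≤ d := by exact_mod_cast hd
  have h1 : (d : ℂ) ^ 2 - 1 ≠ 0 := by exact_mod_cast (show (d : ℝ) ^ 2 - 1 ≠ 0 by nlinarith)
  have h2 : (d : ℂ) + 1 ≠ 0 := by exact_mod_cast (show (d : ℝ) + 1 ≠ 0 by linarith)
  have h3 : (d : ℂ) ≠ 0 := by exact_mod_cast (show (d : ℝ) ≠ 0 by linarith)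
  rw [Amat_apply]
  simp [Fin.sum_univ_three, gramProj, gramWeight, uniformProj, aCoef, Matrix.one_apply]
  by_cases hik : i = k
  · simp [hik]
    field_simp
    ring
  · simp [hik]
    field_simp

theorem isStarProjection_gramProj (d : ℕ) (j : Fin 3) : IsStarProjection (gramProj d j) := by
  have hP := isStarProjection_Phi d
  have hU := isStarProjection_uniformProj d
  fin_cases j
  · exact (IsStarProjection.one _).kronecker hP.one_sub
  · exact hU.one_sub.kronecker hP.one_sub
  · exact hU.kronecker hP

theorem gramWeight_pos {d : ℕ} (hd : 2 ≤ d) (j : Fin 3) : 0 < gramWeight d j := by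
  have hd' : (2 : ℝ) ≤ d := by exact_mod_cast hd
  have hd2 : (0 : ℝ) < d ^ 2 - 1 := by nlinarith
  fin_cases j <;> simp [gramWeight] <;> positivity

theorem Amat_apply_eq_sum_conj_mul {d : ℕ} (hd : 2 ≤ d) (u v : Fin d × (Fin d × Fin d)) :
    Amat d u v = ∑ k : Fin 3 × (Fin d × (Fin d × Fin d)),
      (gramWeight d k.1 : ℂ) * conj (gramProj d k.1 k.2 u) * gramProj d k.1 k.2 v := by
  rw [Amat_eq_sum_smul_gramProj hd]
  exact IsStarProjection.sum_smul_apply _ (isStarProjection_gramProj d) u v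

section CrossForm

variable {d : ℕ}

noncomputable def crossForm {n : ℕ} (α β : (Fin n → Fin d) → ℂ) (p q : Fin n → Fin d) : ℂ :=
  ∑ P, ∑ Q, (∏ t, (1 - Phi d) (p t, q t) (P t, Q t)) * α P * β Q

theorem one_sub_Phi_apply_of_ne {a b : Fin d} (hab : a ≠ b) (y : Fin d × Fin d) :
    (1 - Phi d) (a, b) y = if (a, b) = y then 1 else 0 := by
  simp [Phi, hab, Matrix.one_apply]

theorem crossForm_insertNth {n : ℕ} (α β : (Fin (n + 1) → Fin d) → ℂ) (t : Fin (n + 1))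
    {a b : Fin d} (hab : a ≠ b) (p q : Fin n → Fin d) :
    crossForm α β (t.insertNth a p) (t.insertNth b q) =
      crossForm (fun P => α (t.insertNth a P)) (fun Q => β (t.insertNth b Q)) p q := by
  simp_rw [crossForm, ← (Fin.insertNthEquiv (fun _ => Fin d) t).sum_comp, Fintype.sum_prod_type,
    Fin.insertNthEquiv_apply, Fin.prod_univ_succAbove _ t, Fin.insertNth_apply_same,
    Fin.insertNth_apply_succAbove, one_sub_Phi_apply_of_ne hab, Prod.mk.injEq, ite_and, ite_mul,
    zero_mul, one_mul, Finset.sum_ite_irrel, Finset.sum_const_zero, Finset.sum_ite_eq,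
    Finset.mem_univ, if_true]
  rfl

theorem crossForm_self_of_forall_ne {n : ℕ} {α β : (Fin n → Fin d) → ℂ} {R : Fin n → Fin d}
    (hα : ∀ P, P ≠ R → α P = 0) (hβ : ∀ Q, Q ≠ R → β Q = 0) :
    crossForm α β R R = (1 - (d : ℂ)⁻¹) ^ n * α R * β R := by
  rw [crossForm, Finset.sum_eq_single R (fun P _ hP => by simp [hα P hP]) (by simp),
    Finset.sum_eq_single R (fun Q _ hQ => by simp [hβ Q hQ]) (by simp)]
  simp [Phi]

theorem eq_zero_or_eq_zero_of_crossForm_eq_zero_of_support (hd : d ≠ 1) {n : ℕ}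
    {α β : (Fin n → Fin d) → ℂ} (h : ∀ p q, crossForm α β p q = 0)
    (hsupp : ∀ P Q, α P ≠ 0 → β Q ≠ 0 → P = Q) : α = 0 ∨ β = 0 := by
  by_contra! hne
  obtain ⟨R, hR⟩ := Function.ne_iff.mp hne.1
  obtain ⟨Q₀, hQ₀⟩ := Function.ne_iff.mp hne.2
  obtain rfl : R = Q₀ := hsupp R Q₀ hR hQ₀
  have hα : ∀ P, P ≠ R → α P = 0 := fun P hP => by_contra fun hP' => hP (hsupp P R hP' hQ₀)
  have hβ : ∀ Q, Q ≠ R → β Q = 0 := fun Q hQ => by_contra fun hQ' => hQ (hsupp R Q hR hQ').symm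
  have hd' : 1 - (d : ℂ)⁻¹ ≠ 0 := by
    rw [sub_ne_zero, ne_comm, inv_ne_one]
    exact_mod_cast hd
  have := h R R
  rw [crossForm_self_of_forall_ne hα hβ] at this
  exact mul_ne_zero (mul_ne_zero (pow_ne_zero _ hd') hR) hQ₀ this

theorem eq_zero_or_eq_zero_of_crossForm_eq_zero (hd : d ≠ 1) {n : ℕ}
    {α β : (Fin n → Fin d) → ℂ} (h : ∀ p q, crossForm α β p q = 0) : α = 0 ∨ β = 0 := by
  induction n with
  | zero =>
    exact eq_zero_or_eq_zero_of_crossForm_eq_zero_of_support hd h fun P Q _ _ =>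
      Subsingleton.elim P Q
  | succ n ih =>
    refine eq_zero_or_eq_zero_of_crossForm_eq_zero_of_support hd h fun P Q hP hQ =>
      funext fun t => by_contra fun hne => ?_
    have hslice := ih (α := fun P' => α (t.insertNth (P t) P'))
      (β := fun Q' => β (t.insertNth (Q t) Q')) fun p q => by
        rw [← crossForm_insertNth α β t hne]
        exact h _ _
    rcases hslice with hslice | hslice
    · exact hP (by simpa using congrFun hslice (t.removeNth P))
    · exact hQ (by simpa using congrFun hslice (t.removeNth Q))

end CrossForm

theorem sum_prod_gramProj_zero_mul_eq_crossForm {d n : ℕ}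
    (α β : (Fin n → Fin d) → ((Fin n → Fin d) → ℂ)) (x : (Fin n → Fin d × (Fin d × Fin d)) → ℂ)
    (hx : ∀ s : Fin n → Fin d × (Fin d × Fin d),
      x s = α (fun t => (s t).1) (fun t => (s t).2.1) * β (fun t => (s t).1) (fun t => (s t).2.2))
    (i p q : Fin n → Fin d) :
    ∑ s, (∏ t, gramProj d 0 (i t, (p t, q t)) (s t)) * x s = crossForm (α i) (β i) p q := by
  let e : (Fin n → Fin d × (Fin d × Fin d)) ≃ (Fin n → Fin d) × (Fin n → Fin d) × (Fin n → Fin d) :=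
    (Equiv.arrowProdEquivProdArrow (Fin n) _ _).trans
    ((Equiv.refl (Fin n → Fin d)).prodCongr (Equiv.arrowProdEquivProdArrow (Fin n) _ _))
  rw [← e.symm.sum_comp, Fintype.sum_prod_type, Finset.sum_eq_single i]
  · simp [e, crossForm, gramProj, hx, Fintype.sum_prod_type, mul_assoc]
  · intro S₁ _ hS₁
    obtain ⟨t, ht⟩ := Function.ne_iff.mp hS₁
    refine Finset.sum_eq_zero fun S₂₃ _ => ?_
    rw [Finset.prod_eq_zero (Finset.mem_univ t), zero_mul]
    simp [e, gramProj, Matrix.one_apply, Ne.symm ht]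
  · simp

theorem stmt_0 (d n : ℕ) (hd : 2 ≤ d)
    (α β : (Fin n → Fin d) → ((Fin n → Fin d) → ℂ))
    (x : (Fin n → Fin d × (Fin d × Fin d)) → ℂ)
    (hx : ∀ s : Fin n → Fin d × (Fin d × Fin d),
      x s = α (fun t => (s t).1) (fun t => (s t).2.1) * β (fun t => (s t).1) (fun t => (s t).2.2)) :
    (∑ s : Fin n → Fin d × (Fin d × Fin d), ∑ s' : Fin n → Fin d × (Fin d × Fin d),
        (starRingEnd ℂ) (x s) * AmatPow d n s s' * x s') = 0 ↔
      ∀ i : Fin n → Fin d, α i = 0 ∨ β i = 0 := by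
  constructor
  · intro hQ i
    have hL := sum_prod_mul_eq_zero_of_sum_conj_mul_prod_mul_eq_zero
      (w := fun k : Fin 3 × (Fin d × (Fin d × Fin d)) => gramWeight d k.1)
      (fun k => gramWeight_pos hd k.1)
      (Amat_apply_eq_sum_conj_mul hd) hQ
    refine eq_zero_or_eq_zero_of_crossForm_eq_zero (by omega) fun p q => ?_
    rw [← sum_prod_gramProj_zero_mul_eq_crossForm α β x hx]
    exact hL fun t => (0, (i t, (p t, q t)))
  · intro h
    refine Finset.sum_eq_zero fun s _ => Finset.sum_eq_zero fun s' _ => ?_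
    rcases h (fun t => (s' t).1) with h | h <;> simp [hx s', h]
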